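/- arXiv:2505.00221 — 4 statements merged into one kernel-verified Lean document; each statement's English description precedes it below -/
import Mathlib

section
/- Let g be α-strongly convex and differentiable on ℝ^d with α > 0, X ⊆ ℝ^d nonempty compact, and (x_k) generated by the greedy Frank-Wolfe rule. Then the series ∑_k (γ(x_k) + α‖x_{k+1}-x_k‖²) converges, and in particular γ(x_k) + α‖x_{k+1}-x_k‖² → 0 as k → ∞. -/
open scoped RealInnerProductSpace

theorem stmt_5 {d : ℕ} (g : EuclideanSpace ℝ (Fin d) → ℝ)
    (g' : EuclideanSpace ℝ (Fin d) → EuclideanSpace ℝ (Fin d)) (α : ℝ) (hα : 0 < α)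
    (hdiff : ∀ x, HasGradientAt g (g' x) x)
    (hsc : ∀ x y, g y ≥ g x + ⟪g' x, y - x⟫ + α * ‖y - x‖ ^ 2)
    (X : Set (EuclideanSpace ℝ (Fin d))) (hX : X.Nonempty) (hXc : IsCompact X)
    (x : ℕ → EuclideanSpace ℝ (Fin d)) (hxX : ∀ k, x k ∈ X)
    (hrule : ∀ k, ∀ y ∈ X, ⟪g' (x k), y⟫ ≤ ⟪g' (x k), x (k + 1)⟫)
    (γ : EuclideanSpace ℝ (Fin d) → ℝ)
    (hγ : ∀ z, γ z = sSup ((fun y => ⟪g' z, y - z⟫) '' X)) :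
    Summable (fun k => γ (x k) + α * ‖x (k + 1) - x k‖ ^ 2) ∧
      Filter.Tendsto (fun k => γ (x k) + α * ‖x (k + 1) - x k‖ ^ 2)
        Filter.atTop (nhds 0) := by
  have hbdd : ∀ k, BddAbove ((fun y => ⟪g' (x k), y - x k⟫) '' X) := by
    intro k
    refine ⟨⟪g' (x k), x (k+1) - x k⟫, ?_⟩
    rintro _ ⟨y, hy, rfl⟩
    simp only [inner_sub_right]
    linarith [hrule k y hy]
  have hγ0 : ∀ k, 0 ≤ γ (x k) := by
    intro k
    rw [hγ]
    have hmem : (0:ℝ) ∈ (fun y => ⟪g' (x k), y - x k⟫) '' X := ⟨x k, hxX k, by simp⟩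
    exact le_csSup (hbdd k) hmem
  have hγle : ∀ k, γ (x k) ≤ ⟪g' (x k), x (k+1) - x k⟫ := by
    intro k
    rw [hγ]
    apply csSup_le (hX.image _)
    rintro _ ⟨y, hy, rfl⟩
    simp only [inner_sub_right]
    linarith [hrule k y hy]
  have hnn : ∀ k, 0 ≤ γ (x k) + α * ‖x (k + 1) - x k‖ ^ 2 := by
    intro k
    have := hγ0 k
    positivity
  have hstep : ∀ k, γ (x k) + α * ‖x (k + 1) - x k‖ ^ 2 ≤ g (x (k+1)) - g (x k) := by
    intro k
    have h1 := hsc (x k) (x (k+1))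
    have h2 := hγle k
    linarith
  have hcont : ContinuousOn g X := fun z _ => ((hdiff z).continuousAt).continuousWithinAt
  obtain ⟨z, hz, hzmax⟩ := hXc.exists_isMaxOn hX hcont
  have hsum : ∀ n, ∑ i ∈ Finset.range n,
      (γ (x i) + α * ‖x (i + 1) - x i‖ ^ 2) ≤ g z - g (x 0) := by
    intro n
    have htel : ∑ i ∈ Finset.range n,
        (γ (x i) + α * ‖x (i + 1) - x i‖ ^ 2) ≤ g (x n) - g (x 0) := by
      induction n with
      | zero => simp
      | succ n ih =>
        rw [Finset.sum_range_succ]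
        have := hstep n
        linarith
    have : g (x n) ≤ g z := hzmax (hxX n)
    linarith
  have hS : Summable (fun k => γ (x k) + α * ‖x (k + 1) - x k‖ ^ 2) :=
    summable_of_sum_range_le hnn hsum
  exact ⟨hS, hS.tendsto_atTop_zero⟩
end

section
/- Under the greedy Frank-Wolfe iteration for an α-strongly convex differentiable g over a nonempty compact set X, the minimum over the first k iterations of γ(x_i) + α‖x_{i+1}-x_i‖² is at most (g* - g(x_0))/(k+1), where g* = max_{x∈X} g(x). In particular this quantity decreases at rate O(1/k). -/
open scoped RealInnerProductSpace

theorem stmt_6 {d : ℕ} (g : EuclideanSpace ℝ (Fin d) → ℝ)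
    (g' : EuclideanSpace ℝ (Fin d) → EuclideanSpace ℝ (Fin d)) (α : ℝ) (hα : 0 < α)
    (hdiff : ∀ x, HasGradientAt g (g' x) x)
    (hsc : ∀ x y, g y ≥ g x + ⟪g' x, y - x⟫ + α * ‖y - x‖ ^ 2)
    (X : Set (EuclideanSpace ℝ (Fin d))) (hX : X.Nonempty) (hXc : IsCompact X)
    (x : ℕ → EuclideanSpace ℝ (Fin d)) (hxX : ∀ k, x k ∈ X)
    (hrule : ∀ k, ∀ y ∈ X, ⟪g' (x k), y⟫ ≤ ⟪g' (x k), x (k + 1)⟫)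
    (γ : EuclideanSpace ℝ (Fin d) → ℝ)
    (hγ : ∀ z, γ z = sSup ((fun y => ⟪g' z, y - z⟫) '' X)) :
    ∀ k : ℕ, ∃ i ≤ k,
      γ (x i) + α * ‖x (i + 1) - x i‖ ^ 2 ≤ (sSup (g '' X) - g (x 0)) / (k + 1) := by
  intro k
  set f : ℕ → ℝ := fun i => γ (x i) + α * ‖x (i + 1) - x i‖ ^ 2 with hf
  -- key step bound
  have hstep : ∀ i, f i ≤ g (x (i + 1)) - g (x i) := by
    intro i
    have hγle : γ (x i) ≤ ⟪g' (x i), x (i + 1) - x i⟫ := by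
      rw [hγ]
      apply csSup_le (hX.image _)
      rintro _ ⟨y, hy, rfl⟩
      simp only [inner_sub_right]
      linarith [hrule i y hy]
    have := hsc (x i) (x (i + 1))
    simp only [hf]
    linarith
  -- continuity of g
  have hgc : Continuous g := by
    apply continuous_iff_continuousAt.mpr
    intro z
    exact (hdiff z).differentiableAt.continuousAt
  have hbdd : BddAbove (g '' X) := (hXc.image hgc).bddAbove
  have hsup : g (x (k + 1)) ≤ sSup (g '' X) :=
    le_csSup hbdd ⟨x (k + 1), hxX _, rfl⟩
  have hsum : ∑ i ∈ Finset.range (k + 1), f i ≤ sSup (g '' X) - g (x 0) := by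
    calc ∑ i ∈ Finset.range (k + 1), f i
        ≤ ∑ i ∈ Finset.range (k + 1), (g (x (i + 1)) - g (x i)) :=
          Finset.sum_le_sum fun i _ => hstep i
      _ = g (x (k + 1)) - g (x 0) := Finset.sum_range_sub (fun i => g (x i)) (k + 1)
      _ ≤ sSup (g '' X) - g (x 0) := by linarith
  by_contra h
  push_neg at h
  have hall : ∀ i ∈ Finset.range (k + 1), (sSup (g '' X) - g (x 0)) / (k + 1) < f i := by
    intro i hi
    exact h i (Nat.lt_succ_iff.mp (Finset.mem_range.mp hi))
  have hgt : (k + 1 : ℝ) * ((sSup (g '' X) - g (x 0)) / (k + 1)) <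
      ∑ i ∈ Finset.range (k + 1), f i := by
    have := Finset.sum_lt_sum_of_nonempty (Finset.nonempty_range_iff.mpr (Nat.succ_ne_zero k)) hall
    simpa [Finset.sum_const, Finset.card_range, mul_comm] using this
  have hk1 : (k + 1 : ℝ) ≠ 0 := by positivity
  rw [mul_div_cancel₀ _ hk1] at hgt
  linarith
end

section
/- The greedy Frank-Wolfe sequence for an α-strongly convex smooth g over a compact set X satisfies the sufficient decrease property for F = -g + indicator of X: F(x_k) - F(x_{k+1}) ≥ α‖x_{k+1} - x_k‖² for all k. -/
open scoped RealInnerProductSpace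

theorem stmt_10 {d : ℕ} (g : EuclideanSpace ℝ (Fin d) → ℝ)
    (g' : EuclideanSpace ℝ (Fin d) → EuclideanSpace ℝ (Fin d)) (α : ℝ) (hα : 0 < α)
    (hdiff : ∀ x, HasGradientAt g (g' x) x)
    (hsc : ∀ x y, g y ≥ g x + ⟪g' x, y - x⟫ + α * ‖y - x‖ ^ 2)
    (X : Set (EuclideanSpace ℝ (Fin d))) (hX : X.Nonempty) (hXc : IsCompact X)
    (x : ℕ → EuclideanSpace ℝ (Fin d)) (hxX : ∀ k, x k ∈ X)
    (hrule : ∀ k, ∀ y ∈ X, ⟪g' (x k), y⟫ ≤ ⟪g' (x k), x (k + 1)⟫) :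
    ∀ k, (-g (x k)) - (-g (x (k + 1))) ≥ α * ‖x (k + 1) - x k‖ ^ 2 := by
  intro k
  have h1 := hsc (x k) (x (k + 1))
  have h2 := hrule k (x k) (hxX k)
  have h3 : (0:ℝ) ≤ ⟪g' (x k), x (k + 1) - x k⟫ := by
    rw [inner_sub_right]; linarith
  linarith
end

section
/- Let g : ℝ^d → ℝ be continuously differentiable and X ⊆ ℝ^d a nonempty polytope (compact convex hull of finitely many points). If x* ∈ X satisfies the strict stationarity condition ⟪∇g(x*), y - x*⟫ < 0 for all y ∈ X with y ≠ x*, then x* is a strict local maximum of g on X: there exist β > 0 and r > 0 such that g(x) ≤ g(x*) - β‖x - x*‖ for all x ∈ X with ‖x - x*‖ ≤ r. -/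
open scoped RealInnerProductSpace

theorem stmt_15 {d : ℕ} (g : EuclideanSpace ℝ (Fin d) → ℝ)
    (g' : EuclideanSpace ℝ (Fin d) → EuclideanSpace ℝ (Fin d))
    (hg : ContDiff ℝ 1 g) (hdiff : ∀ x, HasGradientAt g (g' x) x)
    (t : Finset (EuclideanSpace ℝ (Fin d))) (ht : t.Nonempty)
    (X : Set (EuclideanSpace ℝ (Fin d))) (hX : X = convexHull ℝ (t : Set (EuclideanSpace ℝ (Fin d))))
    (xs : EuclideanSpace ℝ (Fin d)) (hxs : xs ∈ X)
    (hstat : ∀ y ∈ X, y ≠ xs → ⟪g' xs, y - xs⟫ < 0) :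
    ∃ β > 0, ∃ r > 0, ∀ x ∈ X, ‖x - xs‖ ≤ r → g x ≤ g xs - β * ‖x - xs‖ := by
  classical
  by_cases hs : (t.filter (· ≠ xs)).Nonempty
  · set s := t.filter (· ≠ xs) with hsdef
    have hsub : (t : Set (EuclideanSpace ℝ (Fin d))) ⊆ X := by
      rw [hX]; exact subset_convexHull ℝ _
    have hc : ∀ y ∈ s, 0 < -⟪g' xs, y - xs⟫ := by
      intro y hy
      rw [hsdef, Finset.mem_filter] at hy
      have := hstat y (hsub hy.1) hy.2
      linarith
    set c := s.inf' hs (fun y => -⟪g' xs, y - xs⟫) with hcdef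
    have hcpos : 0 < c := (Finset.lt_inf'_iff hs).2 hc
    set M := s.sup' hs (fun y => ‖y - xs‖) with hMdef
    have hMpos : 0 < M := by
      obtain ⟨y, hy⟩ := hs
      have hy' := hy
      rw [hsdef, Finset.mem_filter] at hy'
      have hpos : 0 < ‖y - xs‖ := by
        rw [norm_pos_iff]; exact sub_ne_zero.2 hy'.2
      exact lt_of_lt_of_le hpos (Finset.le_sup' (fun y => ‖y - xs‖) hy)
    set α := c / M with hαdef
    have hαpos : 0 < α := div_pos hcpos hMpos
    have key : ∀ x ∈ X, ⟪g' xs, x - xs⟫ ≤ -α * ‖x - xs‖ := by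
      intro x hx
      rw [hX, Finset.convexHull_eq] at hx
      obtain ⟨w, hw0, hw1, hwx⟩ := hx
      have hxeq : x = ∑ y ∈ t, w y • y := by
        rw [← hwx, Finset.centerMass_eq_of_sum_1 _ _ hw1]; simp
      have hxsum : xs = ∑ y ∈ t, w y • xs := by
        rw [← Finset.sum_smul, hw1, one_smul]
      have hdiffeq : x - xs = ∑ y ∈ t, w y • (y - xs) := by
        rw [hxeq]
        conv_lhs => rw [hxsum]
        rw [← Finset.sum_sub_distrib]
        congr 1
        ext y
        rw [smul_sub]
      set L := ∑ y ∈ s, w y with hLdef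
      have hL0 : 0 ≤ L := Finset.sum_nonneg fun y hy =>
        hw0 y (Finset.mem_filter.1 hy).1
      have hinner : ⟪g' xs, x - xs⟫ = ∑ y ∈ t, w y * ⟪g' xs, y - xs⟫ := by
        rw [hdiffeq, inner_sum]
        congr 1
        ext y
        rw [real_inner_smul_right]
      have hsum_eq : ∑ y ∈ t, w y * ⟪g' xs, y - xs⟫
          = ∑ y ∈ s, w y * ⟪g' xs, y - xs⟫ := by
        rw [hsdef]
        refine (Finset.sum_filter_of_ne ?_).symm
        intro y _ hne
        intro hyxs
        apply hne
        rw [hyxs, sub_self, inner_zero_right, mul_zero]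
      have hbound1 : ⟪g' xs, x - xs⟫ ≤ -c * L := by
        rw [hinner, hsum_eq]
        calc ∑ y ∈ s, w y * ⟪g' xs, y - xs⟫
            ≤ ∑ y ∈ s, w y * (-c) := by
              refine Finset.sum_le_sum fun y hy => ?_
              have h1 : c ≤ -⟪g' xs, y - xs⟫ :=
                Finset.inf'_le (fun y => -⟪g' xs, y - xs⟫) hy
              have h2 : 0 ≤ w y := hw0 y (Finset.mem_filter.1 hy).1
              nlinarith
          _ = -c * L := by rw [← Finset.sum_mul]; ring
      have hbound2 : ‖x - xs‖ ≤ M * L := by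
        rw [hdiffeq]
        calc ‖∑ y ∈ t, w y • (y - xs)‖ ≤ ∑ y ∈ t, ‖w y • (y - xs)‖ :=
              norm_sum_le _ _
          _ = ∑ y ∈ t, w y * ‖y - xs‖ := by
              refine Finset.sum_congr rfl fun y hy => ?_
              rw [norm_smul, Real.norm_eq_abs, abs_of_nonneg (hw0 y hy)]
          _ = ∑ y ∈ s, w y * ‖y - xs‖ := by
              rw [hsdef]
              refine (Finset.sum_filter_of_ne ?_).symm
              intro y _ hne hyxs
              apply hne
              rw [hyxs, sub_self, norm_zero, mul_zero]
          _ ≤ ∑ y ∈ s, w y * M := by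
              refine Finset.sum_le_sum fun y hy => ?_
              have h1 : ‖y - xs‖ ≤ M := Finset.le_sup' (fun y => ‖y - xs‖) hy
              have h2 : 0 ≤ w y := hw0 y (Finset.mem_filter.1 hy).1
              nlinarith
          _ = M * L := by rw [← Finset.sum_mul]; ring
      have hαM : α * M = c := by
        rw [hαdef]; field_simp
      nlinarith [hbound1, hbound2, mul_le_mul_of_nonneg_left hbound2 (le_of_lt hαpos)]
    -- little-o argument
    have hlo := hasGradientAt_iff_isLittleO.1 (hdiff xs)
    have hev := hlo.def (half_pos hαpos)
    rw [Metric.eventually_nhds_iff] at hev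
    obtain ⟨ε, hεpos, hε⟩ := hev
    refine ⟨α / 2, half_pos hαpos, ε / 2, half_pos hεpos, ?_⟩
    intro x hx hxr
    have hdist : dist x xs < ε := by
      rw [dist_eq_norm]
      linarith
    have h1 := hε hdist
    simp only [Real.norm_eq_abs] at h1
    have h2 : g x - g xs - ⟪g' xs, x - xs⟫ ≤ (α / 2) * ‖x - xs‖ := by
      have := abs_le.1 h1
      linarith [this.2]
    have h3 := key x hx
    linarith
  · refine ⟨1, one_pos, 1, one_pos, ?_⟩
    intro x hx _
    have h2 : X ⊆ {xs} := by
      rw [hX]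
      have hsubs : (t : Set (EuclideanSpace ℝ (Fin d))) ⊆ {xs} := by
        intro y hy
        by_contra h
        exact hs ⟨y, Finset.mem_filter.2 ⟨hy, h⟩⟩
      calc convexHull ℝ (t : Set (EuclideanSpace ℝ (Fin d)))
          ⊆ convexHull ℝ {xs} := convexHull_mono hsubs
        _ = {xs} := convexHull_singleton xs
    have hxeq : x = xs := h2 hx
    simp [hxeq]
end
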